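/- arXiv:1112.5295 — 2 statements merged into one kernel-verified Lean document; each statement's English description precedes it below -/
import Mathlib

section
/- Let A and B be Hermitian operators on a finite-dimensional Hilbert space. Then for all real t, ‖e^{it(A+B)} e^{−itB} − 1‖ ≤ |t| · ‖A‖, where ‖·‖ is the operator norm. -/
open NormedSpace
open scoped Matrix.Norms.L2Operator

/-!
For skew-adjoint `x`, `y` the curve `X s = exp (s • x) * exp (s • y)` has derivative
`exp (s • x) * (x + y) * exp (s • y)`, whose norm is `‖x + y‖` because the outer factors are
unitary; the mean value inequality then gives `‖X t - 1‖ ≤ |t| * ‖x + y‖`. With `x = i (A + B)`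
and `y = -i B` one has `x + y = i A`.
-/

section Exponential

variable {E : Type*} [NormedRing E] [NormedAlgebra ℝ E] [CompleteSpace E]

theorem hasDerivAt_exp_smul_mul_exp_smul (x y : E) (t : ℝ) :
    HasDerivAt (fun s : ℝ => exp (s • x) * exp (s • y))
      (exp (t • x) * (x + y) * exp (t • y)) t := by
  have hy : Commute y (exp (t • y)) := ((Commute.refl y).smul_right t).exp_right
  refine ((hasDerivAt_exp_smul_const x t).mul (hasDerivAt_exp_smul_const y t)).congr_deriv ?_
  rw [mul_add, add_mul, ← hy.eq, mul_assoc, mul_assoc]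

variable [StarRing E] [CStarRing E] [StarModule ℝ E]

theorem exp_smul_mem_unitary_of_mem_skewAdjoint {x : E} (hx : x ∈ skewAdjoint E) (t : ℝ) :
    exp (t • x) ∈ unitary E :=
  let +nondep : NormedAlgebra ℚ E := .restrictScalars ℚ ℝ E
  exp_mem_unitary_of_mem_skewAdjoint (skewAdjoint.smul_mem t hx)

theorem norm_exp_smul_mul_exp_smul_sub_one_le {x y : E} (hx : x ∈ skewAdjoint E)
    (hy : y ∈ skewAdjoint E) (t : ℝ) :
    ‖exp (t • x) * exp (t • y) - 1‖ ≤ |t| * ‖x + y‖ := by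
  have hspeed (s : ℝ) : ‖exp (s • x) * (x + y) * exp (s • y)‖ ≤ ‖x + y‖ := by
    rw [CStarRing.norm_mul_mem_unitary _ (exp_smul_mem_unitary_of_mem_skewAdjoint hy s),
      CStarRing.norm_mem_unitary_mul _ (exp_smul_mem_unitary_of_mem_skewAdjoint hx s)]
  have hmvt := convex_univ.norm_image_sub_le_of_norm_hasDerivWithin_le
    (fun s _ => (hasDerivAt_exp_smul_mul_exp_smul x y s).hasDerivWithinAt)
    (fun s _ => hspeed s) (Set.mem_univ 0) (Set.mem_univ t)
  simpa [mul_comm] using hmvt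

end Exponential

/-- For Hermitian `A`, `B`: `‖e^{it(A+B)} e^{−itB} − 1‖ ≤ |t|·‖A‖`. -/
theorem norm_exp_mul_exp_sub_one_le
    {n : Type*} [Fintype n] [DecidableEq n]
    (A B : Matrix n n ℂ) (hA : A.IsHermitian) (hB : B.IsHermitian) (t : ℝ) :
    ‖exp ((t : ℂ) • Complex.I • (A + B)) *
        exp (-((t : ℂ) • Complex.I • B)) - 1‖ ≤ |t| * ‖A‖ := by
  have hIAB : Complex.I • (A + B) ∈ skewAdjoint (Matrix n n ℂ) :=
    (hA.add hB).isSelfAdjoint.smul_mem_skewAdjoint Complex.conj_I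
  have hnegIB : -(Complex.I • B) ∈ skewAdjoint (Matrix n n ℂ) :=
    neg_mem (hB.isSelfAdjoint.smul_mem_skewAdjoint Complex.conj_I)
  have hsum : Complex.I • (A + B) + -(Complex.I • B) = Complex.I • A := by
    rw [smul_add]; abel
  have h := norm_exp_smul_mul_exp_smul_sub_one_le hIAB hnegIB t
  rw [hsum, norm_smul, Complex.norm_I, one_mul] at h
  simpa only [← Complex.coe_smul, smul_neg] using h
end

section
/- Let L = A ∪ C be a partition of the index set, with H = Σ_{i∈L} h_i and H_A = Σ_{i∈A} h_i, where the h_i satisfy ⟨h_i⟩ = 0, ‖h_i‖ ≤ h, and ⟨h_i h_j⟩ = 0 for dist(i,j) > 2R. Then |σ² − σ_A²| ≤ 3 h² β_{2R} |C|, where σ² = ⟨H²⟩, σ_A² = ⟨H_A²⟩, and β_{2R} = max_j |{i : dist(i,j) ≤ 2R}|. -/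
/-!
Write `H = H_A + H_C`. By cyclicity of the trace, `σ² − σ_A² = ⟨H_C H⟩ + ⟨H_C H_A⟩`, and each
term is a double sum `Σ_{i ∈ C} Σ_j ⟨h_i h_j⟩`. A normalized trace is bounded by the operator
norm, so every summand is at most `h²` in absolute value, and decorrelation leaves at most
`β_{2R}` nonzero summands for each `i`. This even gives the constant `2` instead of `3`.
-/

open scoped Matrix.Norms.L2Operator
open Finset Matrix

lemma abs_sum_le_mul_card_support {ι : Type*} (s : Finset ι) (f : ι → ℝ) {M : ℝ}
    (hf : ∀ i ∈ s, |f i| ≤ M) : |∑ i ∈ s, f i| ≤ M * #{i ∈ s | f i ≠ 0} := by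
  rw [← sum_filter_ne_zero]
  calc |∑ i ∈ s with f i ≠ 0, f i| ≤ ∑ i ∈ s with f i ≠ 0, |f i| := abs_sum_le_sum_abs _ _
    _ ≤ ∑ _i ∈ {i ∈ s | f i ≠ 0}, M := sum_le_sum fun i hi => hf i (mem_filter.1 hi).1
    _ = M * #{i ∈ s | f i ≠ 0} := by rw [sum_const, nsmul_eq_mul, mul_comm]

lemma card_filter_le_sup_ncard_closedBall {L : Type*} [Fintype L] [PseudoMetricSpace L]
    (s : Finset L) (p : L → Prop) [DecidablePred p] (x : L) {r : ℝ}
    (hp : ∀ y ∈ s, p y → dist y x ≤ r) :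
    #{y ∈ s | p y} ≤ univ.sup fun z : L => (Metric.closedBall z r).ncard :=
  calc #{y ∈ s | p y} ≤ #{y | dist y x ≤ r} :=
        card_le_card fun y hy => by
          rw [mem_filter] at hy
          simpa using hp y hy.1 hy.2
    _ = (Metric.closedBall x r).ncard := by
        rw [← Set.ncard_coe_finset, coe_filter_univ]
        rfl
    _ ≤ _ := le_sup (f := fun z : L => (Metric.closedBall z r).ncard) (mem_univ x)

namespace Matrix

variable {𝕜 : Type*} [RCLike 𝕜] {m n : Type*} [Fintype m] [Fintype n] [DecidableEq n]

lemma norm_entry_le_l2_opNorm (M : Matrix m n 𝕜) (i : m) (j : n) : ‖M i j‖ ≤ ‖M‖ := by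
  have hcol := M.l2_opNorm_mulVec (EuclideanSpace.single j 1)
  rw [PiLp.norm_single, norm_one, mul_one] at hcol
  refine le_trans (le_of_eq ?_) ((PiLp.norm_apply_le _ i).trans hcol)
  simp

lemma norm_trace_le_card_mul_l2_opNorm (M : Matrix n n 𝕜) :
    ‖M.trace‖ ≤ Fintype.card n * ‖M‖ :=
  calc ‖M.trace‖ ≤ ∑ i, ‖M i i‖ := norm_sum_le _ _
    _ ≤ ∑ _i : n, ‖M‖ := sum_le_sum fun i _ => M.norm_entry_le_l2_opNorm i i
    _ = Fintype.card n * ‖M‖ := by simp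

lemma abs_re_trace_div_card_le_l2_opNorm (M : Matrix n n 𝕜) :
    |RCLike.re (M.trace / Fintype.card n)| ≤ ‖M‖ := by
  refine (RCLike.abs_re_le_norm _).trans ?_
  rw [norm_div, RCLike.norm_natCast]
  exact div_le_of_le_mul₀ (Nat.cast_nonneg _) (norm_nonneg _)
    (M.norm_trace_le_card_mul_l2_opNorm.trans_eq (mul_comm _ _))

lemma abs_re_trace_sum_mul_sum_le {ι : Type*} (hop : ι → Matrix n n 𝕜) {h : ℝ}
    (hnorm : ∀ i, ‖hop i‖ ≤ h) (S T : Finset ι) {b : ℕ}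
    (hb : ∀ i ∈ S, #{j ∈ T | (hop i * hop j).trace ≠ 0} ≤ b) :
    |RCLike.re (((∑ i ∈ S, hop i) * ∑ j ∈ T, hop j).trace / Fintype.card n)|
      ≤ h ^ 2 * b * #S := by
  set t : ι → ι → ℝ := fun i j => RCLike.re ((hop i * hop j).trace / Fintype.card n)
  have hpair : ∀ i j, |t i j| ≤ h ^ 2 := fun i j =>
    calc |t i j| ≤ ‖hop i * hop j‖ := abs_re_trace_div_card_le_l2_opNorm _
      _ ≤ ‖hop i‖ * ‖hop j‖ := l2_opNorm_mul _ _
      _ ≤ h * h := mul_le_mul (hnorm i) (hnorm j) (norm_nonneg _) ((norm_nonneg _).trans (hnorm i))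
      _ = h ^ 2 := (sq h).symm
  have hrow : ∀ i ∈ S, |∑ j ∈ T, t i j| ≤ h ^ 2 * b := fun i hi =>
    calc |∑ j ∈ T, t i j| ≤ h ^ 2 * #{j ∈ T | t i j ≠ 0} :=
          abs_sum_le_mul_card_support T (t i) fun j _ => hpair i j
      _ ≤ h ^ 2 * b := by
          gcongr
          refine le_trans (card_le_card (monotone_filter_right T fun j _ ht htr => ?_)) (hb i hi)
          simp [t, htr] at ht
  calc |RCLike.re (((∑ i ∈ S, hop i) * ∑ j ∈ T, hop j).trace / Fintype.card n)|
      = |∑ i ∈ S, ∑ j ∈ T, t i j| := by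
        simp only [t, sum_mul_sum, trace_sum, sum_div, map_sum]
    _ ≤ ∑ i ∈ S, |∑ j ∈ T, t i j| := abs_sum_le_sum_abs _ _
    _ ≤ ∑ _i ∈ S, h ^ 2 * b := sum_le_sum hrow
    _ = h ^ 2 * b * #S := by rw [sum_const, nsmul_eq_mul, mul_comm]

end Matrix

theorem variance_difference_le_general
    {L : Type*} [Fintype L] [MetricSpace L] [DecidableEq L]
    {n : Type*} [Fintype n] [DecidableEq n]
    (hop : L → Matrix n n ℂ)
    (h R : ℝ)
    (hnorm : ∀ i, ‖hop i‖ ≤ h)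
    (hdecor : ∀ i j, 2 * R < dist i j → (hop i * hop j).trace = 0)
    (A C : Finset L) (hdisj : Disjoint A C) (hunion : A ∪ C = Finset.univ) :
    |(((∑ i : L, hop i) * (∑ i : L, hop i)).trace / (Fintype.card n : ℂ)).re
        - (((∑ i ∈ A, hop i) * (∑ i ∈ A, hop i)).trace / (Fintype.card n : ℂ)).re|
      ≤ 3 * h ^ 2 *
        ((Finset.univ.sup fun j : L => {i : L | dist i j ≤ 2 * R}.ncard : ℕ) : ℝ) *
        C.card := by
  set β := Finset.univ.sup fun j : L => {i : L | dist i j ≤ 2 * R}.ncard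
  have hsplit : ∑ i, hop i = ∑ i ∈ A, hop i + ∑ i ∈ C, hop i := by
    rw [← sum_union hdisj, hunion]
  have hsparse : ∀ S : Finset L, ∀ i, #{j ∈ S | (hop i * hop j).trace ≠ 0} ≤ β := fun S i =>
    card_filter_le_sup_ncard_closedBall S _ i fun j _ hij => by
      rw [dist_comm]
      exact not_lt.1 (mt (hdecor i j) hij)
  have hC : ∀ S : Finset L,
      |(((∑ i ∈ C, hop i) * ∑ j ∈ S, hop j).trace / (Fintype.card n : ℂ)).re| ≤ h ^ 2 * β * #C :=
    fun S => abs_re_trace_sum_mul_sum_le hop hnorm C S fun i _ => hsparse S i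
  have hexpand : (((∑ i, hop i) * ∑ i, hop i).trace / (Fintype.card n : ℂ)).re
      - (((∑ i ∈ A, hop i) * ∑ i ∈ A, hop i).trace / (Fintype.card n : ℂ)).re
      = (((∑ i ∈ C, hop i) * ∑ i, hop i).trace / (Fintype.card n : ℂ)).re
        + (((∑ i ∈ C, hop i) * ∑ i ∈ A, hop i).trace / (Fintype.card n : ℂ)).re := by
    rw [hsplit]
    simp only [add_mul, mul_add, trace_add, add_div, Complex.add_re,
      trace_mul_comm (∑ i ∈ A, hop i)]
    ring
  rw [hexpand]
  calc _ ≤ _ := abs_add_le _ _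
    _ ≤ h ^ 2 * β * #C + h ^ 2 * β * #C := add_le_add (hC univ) (hC A)
    _ ≤ 3 * h ^ 2 * β * #C := by linarith [show 0 ≤ h ^ 2 * β * #C by positivity]

/-- For a partition `L = A ∪ C` and `H = Σ_{i∈L} h_i`, `H_A = Σ_{i∈A} h_i`,
with `⟨h_i⟩ = 0`, `‖h_i‖ ≤ h`, `⟨h_i h_j⟩ = 0` for `dist i j > 2R`, one has
`|σ² − σ_A²| ≤ 3h²β_{2R}|C|` with `σ² = ⟨H²⟩`, `σ_A² = ⟨H_A²⟩`. -/
theorem variance_difference_le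
    {L : Type*} [Fintype L] [MetricSpace L] [DecidableEq L]
    {n : Type*} [Fintype n] [DecidableEq n] [Nonempty n]
    (hop : L → Matrix n n ℂ) (hherm : ∀ i, (hop i).IsHermitian)
    (h R : ℝ) (hR : 0 < R)
    (hmean : ∀ i, (hop i).trace / (Fintype.card n : ℂ) = 0)
    (hnorm : ∀ i, ‖hop i‖ ≤ h)
    (hdecor : ∀ i j, 2 * R < dist i j → (hop i * hop j).trace = 0)
    (A C : Finset L) (hdisj : Disjoint A C) (hunion : A ∪ C = Finset.univ) :
    |(((∑ i : L, hop i) * (∑ i : L, hop i)).trace / (Fintype.card n : ℂ)).re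
        - (((∑ i ∈ A, hop i) * (∑ i ∈ A, hop i)).trace / (Fintype.card n : ℂ)).re|
      ≤ 3 * h ^ 2 *
        ((Finset.univ.sup fun j : L => {i : L | dist i j ≤ 2 * R}.ncard : ℕ) : ℝ) *
        C.card :=
  variance_difference_le_general hop h R hnorm hdecor A C hdisj hunion
end
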